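/- arXiv:1610.09967 — 2 statements merged into one kernel-verified Lean document; each statement's English description precedes it below -/
import Mathlib

section
/- Let 0 < λ < 1 and let 1 < q < p be real numbers. Then ‖T_λ(ω(z))‖_q / ‖ω(z)‖_p → +∞ as z → 1⁻. In particular the ℓ^p → ℓ^q norm of the thinning T_λ is infinite and is asymptotically achieved by geometric distributions with ratio tending to 1. -/
/-- The ℓ^p norm of a sequence of complex numbers. -/
noncomputable def lpNorm (p : ℝ) (x : ℕ → ℂ) : ℝ :=
  (∑' n : ℕ, ‖x n‖ ^ p) ^ (1 / p)

/-- The thinning with parameter `l` acting on sequences of complex numbers: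
`[T_l(x)]_n = ∑_{k} C(k,n) l^n (1-l)^{k-n} x_k`. -/
noncomputable def thin (l : ℝ) (x : ℕ → ℂ) : ℕ → ℂ :=
  fun n => ∑' k : ℕ, (Nat.choose k n : ℂ) * (l : ℂ) ^ n * ((1 - l : ℝ) : ℂ) ^ (k - n) * x k

/-- The geometric probability distribution on ℕ with ratio `z`, as a complex sequence. -/
noncomputable def geom (z : ℝ) : ℕ → ℂ := fun n => (((1 - z) * z ^ n : ℝ) : ℂ)

/-! Thinning maps the geometric distribution `ω(z)` to `ω(w)` with `w = λz / (1 - (1 - λ)z)`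
(a negative-binomial series), and `‖ω(z)‖_r^r = (1 - z)^r / (1 - z^r)`. Since `1 - w ≥ 1 - z`,
Bernoulli's inequality `1 - w^q ≤ q (1 - w)` gives `‖ω(w)‖_q ≥ q^(-1/q) (1 - z)^(1 - 1/q)`, while
`1 - z^p ≥ 1 - z` gives `‖ω(z)‖_p ≤ (1 - z)^(1 - 1/p)`. The ratio is therefore at least
`q^(-1/q) (1 - z)^(1/p - 1/q)`, which blows up as `z → 1⁻` because `q < p`. -/

open Filter Real Set Topology

lemma hasSum_choose_mul_pow_sub {𝕜 : Type*} [NormedDivisionRing 𝕜] [HasSummableGeomSeries 𝕜]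
    (n : ℕ) {r : 𝕜} (hr : ‖r‖ < 1) :
    HasSum (fun k ↦ (k.choose n : 𝕜) * r ^ (k - n)) (1 / (1 - r) ^ (n + 1)) := by
  rw [← hasSum_nat_add_iff' n, Finset.sum_eq_zero fun k hk ↦ by
    simp [Nat.choose_eq_zero_of_lt (Finset.mem_range.1 hk)], sub_zero]
  simpa using hasSum_choose_mul_geometric_of_norm_lt_one n hr

noncomputable def thinRatio (l z : ℝ) : ℝ := l * z / (1 - (1 - l) * z)

lemma one_sub_thinRatio {l z : ℝ} (hd : 1 - (1 - l) * z ≠ 0) :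
    1 - thinRatio l z = (1 - z) / (1 - (1 - l) * z) := by
  rw [thinRatio, eq_div_iff hd, sub_mul, div_mul_cancel₀ _ hd]
  ring

lemma thinRatio_nonneg {l z : ℝ} (hl : 0 ≤ l) (hz0 : 0 ≤ z) (hz1 : z < 1) :
    0 ≤ thinRatio l z :=
  div_nonneg (by positivity) (by nlinarith)

lemma one_sub_le_one_sub_thinRatio {l z : ℝ} (hl : 0 ≤ l) (hl1 : l ≤ 1) (hz0 : 0 ≤ z)
    (hz1 : z < 1) : 1 - z ≤ 1 - thinRatio l z := by
  have hd : 0 < 1 - (1 - l) * z := by nlinarith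
  rw [one_sub_thinRatio hd.ne']
  exact le_div_self (by linarith) hd (by nlinarith)

lemma thin_geom {l z : ℝ} (hl : 0 ≤ l) (hl1 : l ≤ 1) (hz0 : 0 ≤ z) (hz1 : z < 1) :
    thin l (geom z) = geom (thinRatio l z) := by
  have hd : 0 < 1 - (1 - l) * z := by nlinarith
  have hr : ‖(1 - l) * z‖ < 1 := by rw [norm_of_nonneg (by positivity)]; linarith
  funext n
  have hterm : ∀ k, (k.choose n : ℝ) * l ^ n * (1 - l) ^ (k - n) * ((1 - z) * z ^ k) =
      l ^ n * z ^ n * (1 - z) * ((k.choose n : ℝ) * ((1 - l) * z) ^ (k - n)) := by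
    intro k
    rcases lt_or_ge k n with hk | hk
    · simp [Nat.choose_eq_zero_of_lt hk]
    · obtain ⟨j, rfl⟩ := Nat.exists_eq_add_of_le hk
      rw [Nat.add_sub_cancel_left, pow_add, mul_pow]
      ring
  have hsum := (hasSum_choose_mul_pow_sub n hr).mul_left (l ^ n * z ^ n * (1 - z))
  simp only [← hterm] at hsum
  have hgeom : (1 - thinRatio l z) * thinRatio l z ^ n =
      l ^ n * z ^ n * (1 - z) * (1 / (1 - (1 - l) * z) ^ (n + 1)) := by
    rw [one_sub_thinRatio hd.ne', thinRatio, div_pow]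
    field_simp
    ring
  simp only [thin, geom, hgeom, ← hsum.tsum_eq, Complex.ofReal_tsum]
  push_cast
  rfl

lemma norm_geom_rpow {z : ℝ} (r : ℝ) (hz0 : 0 ≤ z) (hz1 : z < 1) (n : ℕ) :
    ‖geom z n‖ ^ r = (1 - z) ^ r * (z ^ r) ^ n := by
  rw [geom, Complex.norm_real, norm_of_nonneg (by have := sub_pos.2 hz1; positivity),
    mul_rpow (sub_pos.2 hz1).le (by positivity), rpow_pow_comm hz0]

lemma lpNorm_geom {z r : ℝ} (hz0 : 0 ≤ z) (hz1 : z < 1) (hr : 0 < r) :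
    lpNorm r (geom z) = ((1 - z) ^ r / (1 - z ^ r)) ^ (1 / r) := by
  rw [lpNorm, tsum_congr (norm_geom_rpow r hz0 hz1), tsum_mul_left,
    tsum_geometric_of_lt_one (by positivity) (rpow_lt_one hz0 hz1 hr), ← div_eq_mul_inv]

lemma lpNorm_geom_pos {z r : ℝ} (hz0 : 0 ≤ z) (hz1 : z < 1) (hr : 0 < r) :
    0 < lpNorm r (geom z) := by
  have hz : 0 < 1 - z := sub_pos.2 hz1
  have hzr : 0 < 1 - z ^ r := sub_pos.2 (rpow_lt_one hz0 hz1 hr)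
  rw [lpNorm_geom hz0 hz1 hr]
  positivity

lemma rpow_sub_one_mul_one_div {x p : ℝ} (hx : 0 ≤ x) (hp : p ≠ 0) :
    (x ^ (p - 1)) ^ (1 / p) = x ^ (1 - 1 / p) := by
  rw [← rpow_mul hx]
  congr 1
  field_simp

lemma lpNorm_geom_le {z p : ℝ} (hz0 : 0 ≤ z) (hz1 : z < 1) (hp : 1 ≤ p) :
    lpNorm p (geom z) ≤ (1 - z) ^ (1 - 1 / p) := by
  have hz : 0 < 1 - z := sub_pos.2 hz1
  have hzp : 1 - z ≤ 1 - z ^ p := by linarith [rpow_le_self_of_le_one hz0 hz1.le hp]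
  rw [lpNorm_geom hz0 hz1 (by linarith), ← rpow_sub_one_mul_one_div hz.le (by linarith)]
  refine rpow_le_rpow (div_nonneg (by positivity) (by linarith)) ?_ (by positivity)
  calc (1 - z) ^ p / (1 - z ^ p) ≤ (1 - z) ^ p / (1 - z) := by gcongr
    _ = (1 - z) ^ (p - 1) := by rw [rpow_sub_one hz.ne']

lemma one_sub_rpow_le_mul_one_sub {w q : ℝ} (hw : 0 ≤ w) (hq : 1 ≤ q) :
    1 - w ^ q ≤ q * (1 - w) := by
  have := one_add_mul_self_le_rpow_one_add (show -1 ≤ w - 1 by linarith) hq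
  rw [add_sub_cancel] at this
  linarith

lemma le_lpNorm_geom {w q : ℝ} (hw0 : 0 ≤ w) (hw1 : w < 1) (hq : 1 ≤ q) :
    (1 - w) ^ (1 - 1 / q) / q ^ (1 / q) ≤ lpNorm q (geom w) := by
  have hw : 0 < 1 - w := sub_pos.2 hw1
  have hq0 : 0 < q := by linarith
  have hwq : 0 < 1 - w ^ q := sub_pos.2 (rpow_lt_one hw0 hw1 hq0)
  rw [lpNorm_geom hw0 hw1 hq0, ← rpow_sub_one_mul_one_div hw.le hq0.ne',
    ← div_rpow (by positivity) hq0.le]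
  gcongr ?_ ^ _
  calc (1 - w) ^ (q - 1) / q = (1 - w) ^ q / (q * (1 - w)) := by
        rw [rpow_sub_one hw.ne', div_div, mul_comm]
    _ ≤ (1 - w) ^ q / (1 - w ^ q) := by gcongr; exact one_sub_rpow_le_mul_one_sub hw0 hq

lemma tendsto_one_sub_rpow_nhdsLT_one {c : ℝ} (hc : c < 0) :
    Tendsto (fun z : ℝ ↦ (1 - z) ^ c) (𝓝[<] 1) atTop := by
  refine (tendsto_rpow_neg_nhdsGT_zero hc).comp (tendsto_nhdsWithin_iff.2 ⟨?_, ?_⟩)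
  · exact ((continuous_const.sub continuous_id).tendsto' 1 0 (sub_self 1)).mono_left
      nhdsWithin_le_nhds
  · exact eventually_nhdsWithin_of_forall fun z hz ↦ mem_Ioi.2 (sub_pos.2 hz)

theorem thinning_pq_norm_infinite (l p q : ℝ) (hl : 0 < l) (hl1 : l < 1)
    (hq : 1 < q) (hqp : q < p) :
    Filter.Tendsto (fun z => lpNorm q (thin l (geom z)) / lpNorm p (geom z))
      (nhdsWithin 1 (Set.Iio 1)) Filter.atTop := by
  have hq0 : 0 < q := by linarith
  have hp0 : 0 < p := by linarith
  have hexp : 1 / p - 1 / q < 0 := sub_neg.2 (one_div_lt_one_div_of_lt hq0 hqp)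
  have hq1 : 0 ≤ 1 - 1 / q := sub_nonneg.2 ((div_le_one hq0).2 hq.le)
  refine tendsto_atTop_mono' _ ?_
    ((tendsto_one_sub_rpow_nhdsLT_one hexp).atTop_div_const (rpow_pos_of_pos hq0 (1 / q)))
  filter_upwards [Ioo_mem_nhdsLT zero_lt_one] with z ⟨hz0, hz1⟩
  set w := thinRatio l z
  have hz : 0 < 1 - z := sub_pos.2 hz1
  have hzw : 1 - z ≤ 1 - w := one_sub_le_one_sub_thinRatio hl.le hl1.le hz0.le hz1
  have hnorm_pos := lpNorm_geom_pos hz0.le hz1 hp0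
  rw [thin_geom hl.le hl1.le hz0.le hz1]
  calc (1 - z) ^ (1 / p - 1 / q) / q ^ (1 / q)
      = (1 - z) ^ (1 - 1 / q) / q ^ (1 / q) / (1 - z) ^ (1 - 1 / p) := by
        rw [div_right_comm, ← rpow_sub hz]; ring_nf
    _ ≤ (1 - w) ^ (1 - 1 / q) / q ^ (1 / q) / lpNorm p (geom z) :=
        div_le_div₀ (div_nonneg (rpow_nonneg (hz.le.trans hzw) _) (rpow_nonneg hq0.le _))
          (by gcongr) hnorm_pos (lpNorm_geom_le hz0.le hz1 (by linarith))
    _ ≤ lpNorm q (geom w) / lpNorm p (geom z) :=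
        div_le_div_of_nonneg_right
          (le_lpNorm_geom (thinRatio_nonneg hl.le hz0.le hz1) (by linarith) hq.le) hnorm_pos.le
end

section
/- Let 0 < a < 1 and ξ ∈ (0,1). Let w : ℕ → ℝ satisfy w_n > 0 and w_{n+1} ≤ w_n for all n ∈ ℕ, and w_0 ≤ ξ. Assume that 2(g(w_1) − g(w_0)) = k(w_0) − g(w_0) − ν(ξ,a) ln w_0 and that, for every n ≥ 2, (n+1)(g(w_n) − g(w_{n−1})) = (n−1)(k(w_{n−1}) − k(w_{n−2})) + k(w_{n−1}) − g(w_{n−1}) − ν(ξ,a) ln w_{n−1}. Then w_n = ξ for every n ∈ ℕ. -/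
/-- `g(s) = (a-1) s^a` (real power, so `g(0) = 0`). -/
noncomputable def gfun (a s : ℝ) : ℝ := (a - 1) * s ^ a

/-- `k(s) = a s^{a-1} - 1`. -/
noncomputable def kfun (a s : ℝ) : ℝ := a * s ^ (a - 1) - 1

/-- `ν(s,a) = (a s^{a-1} - 1 + (1-a) s^a) / ln s`. -/
noncomputable def nufun (a s : ℝ) : ℝ :=
  (a * s ^ (a - 1) - 1 + (1 - a) * s ^ a) / Real.log s

/-!
Write `h = k - g`, so that `ν(s) = h(s) / ln s` and the driving term of the recurrence is
`φ(s) = h(s) - ν(ξ) ln s = ln s · (ν(s) - ν(ξ))`. Summing the recurrence gives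
`(n+2) g(w_{n+1}) - (n+1) k(w_n) = g(w_0) - ν(ξ) Σ_{m ≤ n} ln w_m`.
If `w_0 = ξ`, strong induction with `φ(ξ) = 0` and injectivity of `g` gives `w_n = ξ`
for all `n`. If `w_0 < ξ`, Bernoulli's inequality gives `h(s^λ) < λ h(s)` for `0 < λ < 1`,
i.e. `ν` is strictly increasing on `(0,1)`, so `φ(w_n) ≥ φ(w_0) > 0` along the decreasing
sequence. As `ν(ξ) < 0`, the summed identity yields
`g(w_{n+1}) - g(w_0) ≥ (n+1) (φ(w_0) - (g(w_{n+1}) - g(w_n)))`, which is impossible: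
`g(w_n)` increases and is bounded by `0`, so its increments tend to `0`.
-/

open Real Set Filter Topology Finset

lemma rpow_lt_one_add_mul_sub_one {x p : ℝ} (hx : 0 < x) (hx1 : x ≠ 1) (hp0 : 0 < p)
    (hp1 : p < 1) : x ^ p < 1 + p * (x - 1) := by
  simpa using
    rpow_one_add_lt_one_add_mul_self (s := x - 1) (by linarith) (sub_ne_zero.2 hx1) hp0 hp1

lemma nonpos_of_monotone_of_mul_sub_le {G : ℕ → ℝ} {c : ℝ} (hG : Monotone G)
    (hbdd : BddAbove (range G))
    (h : ∀ n : ℕ, ((n : ℝ) + 1) * (c - (G (n + 1) - G n)) ≤ G (n + 1) - G 0) : c ≤ 0 := by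
  by_contra! hc
  have hL := tendsto_atTop_ciSup hG hbdd
  obtain ⟨B, hB⟩ := hbdd
  have hΔ : Tendsto (fun n ↦ c - (G (n + 1) - G n)) atTop (𝓝 c) := by
    simpa using ((tendsto_add_atTop_iff_nat 1).2 hL).sub hL |>.const_sub c
  have hlin : Tendsto (fun n : ℕ ↦ (n : ℝ) + 1) atTop atTop :=
    tendsto_atTop_add_const_right _ 1 tendsto_natCast_atTop_atTop
  have htop := hlin.atTop_mul_pos hc hΔ
  obtain ⟨n, hn⟩ := (htop.eventually_gt_atTop (B - G 0)).exists
  linarith [h n, hB ⟨n + 1, rfl⟩]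

/-- The recurrence of the statement, for `G n = g(w_n)`, `K n = k(w_n)`, `L n = ln w_n`. -/
structure KKTRecurrence (G K L : ℕ → ℝ) (ν : ℝ) : Prop where
  first : 2 * (G 1 - G 0) = K 0 - G 0 - ν * L 0
  step : ∀ n : ℕ, 2 ≤ n →
    ((n : ℝ) + 1) * (G n - G (n - 1)) =
      ((n : ℝ) - 1) * (K (n - 1) - K (n - 2)) + K (n - 1) - G (n - 1) - ν * L (n - 1)

namespace KKTRecurrence

variable {G K L : ℕ → ℝ} {ν : ℝ}

theorem sum_eq (hR : KKTRecurrence G K L ν) (n : ℕ) :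
    ((n : ℝ) + 2) * G (n + 1) - ((n : ℝ) + 1) * K n =
      G 0 - ν * ∑ m ∈ range (n + 1), L m := by
  induction n with
  | zero => simp only [zero_add, sum_range_one, Nat.cast_zero]; linear_combination hR.first
  | succ n ih =>
    have hstep := hR.step (n + 2) (by omega)
    simp only [show n + 2 - 1 = n + 1 by omega, show n + 2 - 2 = n by omega] at hstep
    rw [sum_range_succ]
    push_cast at hstep ⊢
    linear_combination hstep + ih

theorem succ_eq_of_forall_le {Gc Kc Lc : ℝ} (hR : KKTRecurrence G K L ν) (hc : ν * Lc = Kc - Gc)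
    {n : ℕ} (hn : ∀ m ≤ n, G m = Gc ∧ K m = Kc ∧ L m = Lc) : G (n + 1) = Gc := by
  have hsum : ∑ m ∈ range (n + 1), L m = (n + 1) * Lc := by
    rw [sum_congr rfl fun m hm ↦ (hn m (Nat.lt_succ_iff.1 (mem_range.1 hm))).2.2]
    simp
  have h := hR.sum_eq n
  rw [hsum, (hn 0 n.zero_le).1, (hn n le_rfl).2.1] at h
  have hn2 : ((n : ℝ) + 2) ≠ 0 := by positivity
  exact mul_left_cancel₀ hn2 (by linear_combination h - (n + 1) * hc)

theorem mul_sub_le (hR : KKTRecurrence G K L ν) (hν : ν ≤ 0) (hL : Antitone L) (n : ℕ) :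
    ((n : ℝ) + 1) * (K n - G n - ν * L n - (G (n + 1) - G n)) ≤ G (n + 1) - G 0 := by
  have hsum : ((n : ℝ) + 1) * L n ≤ ∑ m ∈ range (n + 1), L m := by
    calc ((n : ℝ) + 1) * L n = ∑ _m ∈ range (n + 1), L n := by simp
      _ ≤ _ := sum_le_sum fun m hm ↦ hL (Nat.lt_succ_iff.1 (mem_range.1 hm))
  linarith [hR.sum_eq n, mul_le_mul_of_nonpos_left hsum hν]

end KKTRecurrence

section

variable {a : ℝ}

lemma kfun_sub_gfun (a s : ℝ) : kfun a s - gfun a s = a * s ^ (a - 1) - 1 + (1 - a) * s ^ a := by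
  unfold kfun gfun; ring

lemma nufun_mul_log {s : ℝ} (hs : log s ≠ 0) : nufun a s * log s = kfun a s - gfun a s := by
  rw [nufun, kfun_sub_gfun, div_mul_cancel₀ _ hs]

lemma kfun_sub_gfun_pos (ha : 0 < a) (ha1 : a < 1) {s : ℝ} (hs : 0 < s) (hs1 : s ≠ 1) :
    0 < kfun a s - gfun a s := by
  have hB := rpow_lt_one_add_mul_sub_one hs hs1 (p := 1 - a) (by linarith) (by linarith)
  have e1 : s ^ (a - 1) * s = s ^ a := by rw [← rpow_add_one hs.ne']; ring_nf
  have e2 : s ^ (a - 1) * s ^ (1 - a) = 1 := by rw [← rpow_add hs]; simp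
  rw [kfun_sub_gfun]
  calc 0 < s ^ (a - 1) * (1 + (1 - a) * (s - 1) - s ^ (1 - a)) :=
        mul_pos (rpow_pos_of_pos hs _) (by linarith)
    _ = _ := by linear_combination (1 - a) * e1 - e2

lemma kfun_sub_gfun_rpow_lt (ha : 0 < a) (ha1 : a < 1) {s l : ℝ} (hs : 0 < s) (hs1 : s < 1)
    (hl0 : 0 < l) (hl1 : l < 1) :
    kfun a (s ^ l) - gfun a (s ^ l) < l * (kfun a s - gfun a s) := by
  have hpow (b : ℝ) : (s ^ l) ^ b = (s ^ b) ^ l := by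
    rw [← rpow_mul hs.le, ← rpow_mul hs.le, mul_comm]
  have h1 := rpow_lt_one_add_mul_sub_one (rpow_pos_of_pos hs (a - 1))
    (one_lt_rpow_of_pos_of_lt_one_of_neg hs hs1 (by linarith)).ne' hl0 hl1
  have h2 := rpow_lt_one_add_mul_sub_one (rpow_pos_of_pos hs a)
    (rpow_lt_one hs.le hs1 ha).ne hl0 hl1
  rw [kfun_sub_gfun, kfun_sub_gfun, hpow, hpow]
  linarith [mul_lt_mul_of_pos_left h1 ha, mul_lt_mul_of_pos_left h2 (sub_pos.2 ha1)]

lemma nufun_strictMonoOn (ha : 0 < a) (ha1 : a < 1) : StrictMonoOn (nufun a) (Ioo 0 1) := by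
  rintro s ⟨hs0, hs1⟩ u ⟨hu0, hu1⟩ hsu
  have hlogs := log_neg hs0 hs1
  have hlogu := log_neg hu0 hu1
  set l := log u / log s
  have hl : l * log s = log u := div_mul_cancel₀ _ hlogs.ne
  have hu : s ^ l = u := by rw [rpow_def_of_pos hs0, mul_comm, hl, exp_log hu0]
  have key := kfun_sub_gfun_rpow_lt ha ha1 hs0 hs1 (div_pos_of_neg_of_neg hlogu hlogs)
    ((div_lt_one_of_neg hlogs).2 (log_lt_log hs0 hsu))
  rw [hu, ← nufun_mul_log hlogu.ne, ← nufun_mul_log hlogs.ne, mul_left_comm, hl] at key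
  exact (mul_lt_mul_right_of_neg hlogu).1 key

lemma nufun_neg (ha : 0 < a) (ha1 : a < 1) {s : ℝ} (hs0 : 0 < s) (hs1 : s < 1) :
    nufun a s < 0 := by
  rw [nufun, ← kfun_sub_gfun]
  exact div_neg_of_pos_of_neg (kfun_sub_gfun_pos ha ha1 hs0 hs1.ne) (log_neg hs0 hs1)

lemma antitoneOn_log_mul_nufun_sub (ha : 0 < a) (ha1 : a < 1) {ξ : ℝ} (hξ1 : ξ < 1) :
    AntitoneOn (fun s ↦ log s * (nufun a s - nufun a ξ)) (Ioc 0 ξ) := by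
  rintro s ⟨hs0, -⟩ t ⟨ht0, htξ⟩ hst
  have hν := (nufun_strictMonoOn ha ha1).monotoneOn
  have hνs := hν ⟨hs0, hst.trans_lt (htξ.trans_lt hξ1)⟩ ⟨ht0, htξ.trans_lt hξ1⟩ hst
  have hνt := hν ⟨ht0, htξ.trans_lt hξ1⟩ ⟨hs0.trans_le (hst.trans htξ), hξ1⟩ htξ
  have hlogs := log_le_log hs0 hst
  have hlogt := log_neg ht0 (htξ.trans_lt hξ1)
  nlinarith [mul_le_mul (neg_le_neg hlogs) (sub_le_sub_left hνs (nufun a ξ))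
    (sub_nonneg.2 hνt) (by linarith)]

lemma gfun_strictAntiOn (ha : 0 < a) (ha1 : a < 1) : StrictAntiOn (gfun a) (Ici 0) :=
  fun _ hx _ _ hxy ↦ mul_lt_mul_of_neg_left (rpow_lt_rpow hx hxy ha) (by linarith)

lemma gfun_nonpos (ha1 : a ≤ 1) {s : ℝ} (hs : 0 ≤ s) : gfun a s ≤ 0 :=
  mul_nonpos_of_nonpos_of_nonneg (by linarith) (rpow_nonneg hs a)

theorem eq_of_kktRecurrence_of_head_eq (ha : 0 < a) (ha1 : a < 1) {ξ : ℝ} (hξ0 : 0 < ξ)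
    (hξ1 : ξ < 1) {w : ℕ → ℝ} (hpos : ∀ n, 0 < w n)
    (hR : KKTRecurrence (fun n ↦ gfun a (w n)) (fun n ↦ kfun a (w n)) (fun n ↦ log (w n))
      (nufun a ξ))
    (h0 : w 0 = ξ) (n : ℕ) : w n = ξ := by
  induction n using Nat.strong_induction_on with
  | _ n ih =>
    cases n with
    | zero => exact h0
    | succ n =>
      refine (gfun_strictAntiOn ha ha1).injOn (hpos _).le hξ0.le ?_
      refine hR.succ_eq_of_forall_le (nufun_mul_log (log_neg hξ0 hξ1).ne) fun m hm ↦ ?_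
      simp only [ih m (by omega), and_self]

end

theorem kkt_ratios_constant (a ξ : ℝ) (ha : 0 < a) (ha1 : a < 1)
    (hξ : ξ ∈ Set.Ioo (0 : ℝ) 1) (w : ℕ → ℝ)
    (hpos : ∀ n, 0 < w n) (hdec : ∀ n, w (n + 1) ≤ w n) (hw0 : w 0 ≤ ξ)
    (h1 : 2 * (gfun a (w 1) - gfun a (w 0)) =
      kfun a (w 0) - gfun a (w 0) - nufun a ξ * Real.log (w 0))
    (hrec : ∀ n : ℕ, 2 ≤ n →
      ((n : ℝ) + 1) * (gfun a (w n) - gfun a (w (n - 1))) =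
        ((n : ℝ) - 1) * (kfun a (w (n - 1)) - kfun a (w (n - 2))) +
          kfun a (w (n - 1)) - gfun a (w (n - 1)) - nufun a ξ * Real.log (w (n - 1))) :
    ∀ n, w n = ξ := by
  obtain ⟨hξ0, hξ1⟩ := hξ
  have hR : KKTRecurrence (fun n ↦ gfun a (w n)) (fun n ↦ kfun a (w n)) (fun n ↦ log (w n))
      (nufun a ξ) := ⟨h1, hrec⟩
  rcases hw0.eq_or_lt with h0 | h0
  · exact eq_of_kktRecurrence_of_head_eq ha ha1 hξ0 hξ1 hpos hR h0
  exfalso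
  have hw : Antitone w := antitone_nat_of_succ_le hdec
  have hw1 (n : ℕ) : w n < 1 := ((hw n.zero_le).trans_lt h0).trans hξ1
  have hc : 0 < log (w 0) * (nufun a (w 0) - nufun a ξ) :=
    mul_pos_of_neg_of_neg (log_neg (hpos 0) (hw1 0))
      (sub_neg.2 (nufun_strictMonoOn ha ha1 ⟨hpos 0, hw1 0⟩ ⟨hξ0, hξ1⟩ h0))
  have hG : Monotone fun n ↦ gfun a (w n) := fun m n hmn ↦
    (gfun_strictAntiOn ha ha1).antitoneOn (hpos n).le (hpos m).le (hw hmn)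
  refine hc.not_ge (nonpos_of_monotone_of_mul_sub_le hG ⟨0, ?_⟩ fun n ↦ ?_)
  · rintro _ ⟨n, rfl⟩
    exact gfun_nonpos ha1.le (hpos n).le
  · refine le_trans ?_ (hR.mul_sub_le (nufun_neg ha ha1 hξ0 hξ1).le
      (fun m n hmn ↦ log_le_log (hpos n) (hw hmn)) n)
    have hφ := antitoneOn_log_mul_nufun_sub ha ha1 hξ1 ⟨hpos n, (hw n.zero_le).trans h0.le⟩
      ⟨hpos 0, h0.le⟩ (hw n.zero_le)
    have hν := nufun_mul_log (a := a) (log_neg (hpos n) (hw1 n)).ne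
    gcongr
    simp only at hφ ⊢
    linarith
end
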